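/- Along a periodic orbit on the level set x1 x2 x3 = z, the identity ⟨x_i x_{i+1}²⟩_z - z = -⟨x_{i+1} ẋ_i⟩_z holds for each i ∈ ℤ/3ℤ, where ẋ_i = x_i(x_{i-1} - x_{i+1}); consequently m(z) := -⟨x_{i+1} ẋ_i⟩_z does not depend on i and equals -A(z)/T(z) > 0. -/

import Mathlib

open Set

/-- The cyclic Lotka-Volterra vector field F(x₁,x₂) = (x₁(1-x₁-2x₂), x₂(2x₁+x₂-1)). -/
def LV (p : ℝ × ℝ) : ℝ × ℝ := (p.1 * (1 - p.1 - 2 * p.2), p.2 * (2 * p.1 + p.2 - 1))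

/-- Coordinate functions x₀ = x₁, x₁ = x₂, x₂ = x₃ = 1-x₁-x₂, indexed by ℤ/3ℤ. -/
def coordFn (i : ZMod 3) (p : ℝ × ℝ) : ℝ :=
  if i = 0 then p.1 else if i = 1 then p.2 else 1 - p.1 - p.2

/-- The time derivative ẋ_i = x_i(x_{i-1} - x_{i+1}) expressed as a function of the point. -/
def dotFn (i : ZMod 3) (p : ℝ × ℝ) : ℝ :=
  coordFn i p * (coordFn (i - 1) p - coordFn (i + 1) p)

/-- Time average ⟨x_i x_j²⟩ over a T-periodic orbit X. -/
noncomputable def avgPair (X : ℝ → ℝ × ℝ) (T : ℝ) (i j : ZMod 3) : ℝ :=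
  (1 / T) * ∫ t in (0:ℝ)..T, coordFn i (X t) * coordFn j (X t) ^ 2

/-- Time average ⟨x_{i+1} ẋ_i⟩ over a T-periodic orbit X. -/
noncomputable def avgDot (X : ℝ → ℝ × ℝ) (T : ℝ) (i : ZMod 3) : ℝ :=
  (1 / T) * ∫ t in (0:ℝ)..T, coordFn (i + 1) (X t) * dotFn i (X t)

/-!
On the level set, `x_{i+1} ẋ_i = x_{i-1} x_i x_{i+1} - x_i x_{i+1}² = z - x_i x_{i+1}²`, which is
the first identity. Over a period, the average of an exact derivative vanishes: from
`ẋ_i = x_{i-1} x_i - x_i x_{i+1}` all averages `⟨x_i x_{i+1}⟩` agree, from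
`(x_i x_{i+1})˙ = x_i² x_{i+1} - x_i x_{i+1}²` so do `⟨x_i² x_{i+1}⟩` and `⟨x_i x_{i+1}²⟩`, and
expanding `x_i x_{i+1}² = x_i x_{i+1} (1 - x_i - x_{i-1})` gives
`2 ⟨x_i x_{i+1}²⟩ = ⟨x_0 x_1⟩ - z`, independent of `i`.

For the sign, `(log x_i)˙ = x_{i-1} - x_{i+1}` forces `⟨x_i⟩ = 1/3`, so the (never vanishing)
coordinates are positive. Then `(x_0 x_1 + x_1 x_2 + x_2 x_0)² ≥ 3z > (9z)²` for `z < 1/27`, hence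
`⟨x_0 x_1⟩ > 3z`, i.e. `-⟨x_1 ẋ_0⟩ = (⟨x_0 x_1⟩ - 3z)/2 > 0`.
-/

@[to_additive]
theorem ZMod.mul_rotate_three {M : Type*} [CommMonoid M] (f : ZMod 3 → M) (i : ZMod 3) :
    f (i - 1) * f i * f (i + 1) = f 0 * f 1 * f 2 := by
  fin_cases i
  · show f 2 * f 0 * f 1 = _
    ac_rfl
  · rfl
  · show f 1 * f 2 * f 0 = _
    ac_rfl

theorem ZMod.add_one_add_one_eq_sub_one (i : ZMod 3) : i + 1 + 1 = i - 1 := by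
  revert i
  decide

theorem integral_eq_zero_of_hasDerivAt_of_eq {F f : ℝ → ℝ} {a b : ℝ}
    (hF : ∀ t, HasDerivAt F (f t) t) (hf : Continuous f) (hFab : F b = F a) :
    ∫ t in a..b, f t = 0 := by
  rw [intervalIntegral.integral_eq_sub_of_hasDerivAt (fun t _ => hF t)
    (hf.intervalIntegrable a b), hFab, sub_self]

theorem Continuous.pos_of_integral_pos {f : ℝ → ℝ} {a b : ℝ} (hf : Continuous f)
    (hne : ∀ t, f t ≠ 0) (hab : a ≤ b) (hint : 0 < ∫ t in a..b, f t) (t : ℝ) : 0 < f t := by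
  obtain ⟨s, hs⟩ : ∃ s, 0 < f s := by
    by_contra! h
    have : 0 ≤ ∫ t in a..b, -f t :=
      intervalIntegral.integral_nonneg hab fun t _ => neg_nonneg.2 (h t)
    rw [intervalIntegral.integral_neg] at this
    linarith
  by_contra! ht
  obtain ⟨u, hu⟩ := intermediate_value_univ t s hf ⟨ht, hs.le⟩
  exact hne u hu

theorem nine_mul_lt_mul_add_mul_add_mul {a b c : ℝ} (ha : 0 < a) (hb : 0 < b) (hc : 0 < c)
    (hsum : a + b + c = 1) (hprod : a * b * c < 1 / 27) :
    9 * (a * b * c) < a * b + b * c + c * a := by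
  have maclaurin : 3 * (a * b * c) * (a + b + c) ≤ (a * b + b * c + c * a) ^ 2 := by
    nlinarith [sq_nonneg (a * b - b * c), sq_nonneg (b * c - c * a), sq_nonneg (c * a - a * b)]
  rw [hsum] at maclaurin
  have habc : 0 < a * b * c := by positivity
  nlinarith [mul_pos ha hb, mul_pos hb hc, mul_pos hc ha]

theorem ne_zero_of_mul_mul_eq {x : ZMod 3 → ℝ → ℝ} {z : ℝ}
    (hz : ∀ t, x 0 t * x 1 t * x 2 t = z) (hz0 : z ≠ 0) (i : ZMod 3) (t : ℝ) : x i t ≠ 0 := by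
  intro hxi
  apply hz0
  rw [← hz t, ← ZMod.mul_rotate_three (fun j => x j t) i, hxi, mul_zero, zero_mul]

structure IsCyclicLVOrbit (x : ZMod 3 → ℝ → ℝ) (T : ℝ) : Prop where
  hasDerivAt : ∀ i t, HasDerivAt (x i) (x i t * (x (i - 1) t - x (i + 1) t)) t
  periodic : ∀ i, x i T = x i 0
  sum_eq_one : ∀ t, x 0 t + x 1 t + x 2 t = 1

namespace IsCyclicLVOrbit

variable {x : ZMod 3 → ℝ → ℝ} {T z : ℝ}

theorem continuous (h : IsCyclicLVOrbit x T) (i : ZMod 3) : Continuous (x i) :=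
  continuous_iff_continuousAt.2 fun t => (h.hasDerivAt i t).continuousAt

theorem add_add_eq_one (h : IsCyclicLVOrbit x T) (i : ZMod 3) (t : ℝ) :
    x (i - 1) t + x i t + x (i + 1) t = 1 :=
  (ZMod.add_rotate_three (fun j => x j t) i).trans (h.sum_eq_one t)

theorem integral_pred_mul_eq_integral_mul_succ (h : IsCyclicLVOrbit x T) (i : ZMod 3) :
    ∫ t in (0:ℝ)..T, x (i - 1) t * x i t = ∫ t in (0:ℝ)..T, x i t * x (i + 1) t := by
  have hc := h.continuous
  have hdot : ∫ t in (0:ℝ)..T, x i t * (x (i - 1) t - x (i + 1) t) = 0 :=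
    integral_eq_zero_of_hasDerivAt_of_eq (h.hasDerivAt i) (by fun_prop) (h.periodic i)
  rw [← sub_eq_zero, ← intervalIntegral.integral_sub
    (Continuous.intervalIntegrable (by fun_prop) _ _)
    (Continuous.intervalIntegrable (by fun_prop) _ _), ← hdot]
  congr 1 with t
  ring

theorem integral_mul_succ_eq (h : IsCyclicLVOrbit x T) (i : ZMod 3) :
    ∫ t in (0:ℝ)..T, x i t * x (i + 1) t = ∫ t in (0:ℝ)..T, x 0 t * x 1 t := by
  fin_cases i
  · rfl
  · exact (h.integral_pred_mul_eq_integral_mul_succ 1).symm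
  · exact ((h.integral_pred_mul_eq_integral_mul_succ 1).trans
      (h.integral_pred_mul_eq_integral_mul_succ 2)).symm

theorem hasDerivAt_mul_succ (h : IsCyclicLVOrbit x T) (i : ZMod 3) (t : ℝ) :
    HasDerivAt (fun t => x i t * x (i + 1) t)
      (x i t ^ 2 * x (i + 1) t - x i t * x (i + 1) t ^ 2) t := by
  refine ((h.hasDerivAt i t).mul (h.hasDerivAt (i + 1) t)).congr_deriv ?_
  rw [ZMod.add_one_add_one_eq_sub_one, add_sub_cancel_right]
  ring

theorem integral_sq_mul_succ (h : IsCyclicLVOrbit x T) (i : ZMod 3) :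
    ∫ t in (0:ℝ)..T, x i t ^ 2 * x (i + 1) t = ∫ t in (0:ℝ)..T, x i t * x (i + 1) t ^ 2 := by
  have hc := h.continuous
  rw [← sub_eq_zero, ← intervalIntegral.integral_sub
    (Continuous.intervalIntegrable (by fun_prop) _ _)
    (Continuous.intervalIntegrable (by fun_prop) _ _)]
  exact integral_eq_zero_of_hasDerivAt_of_eq (h.hasDerivAt_mul_succ i) (by fun_prop)
    (by simp only [h.periodic])

theorem integral_mul_succ_sq (h : IsCyclicLVOrbit x T)
    (hz : ∀ t, x 0 t * x 1 t * x 2 t = z) (i : ZMod 3) :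
    ∫ t in (0:ℝ)..T, x i t * x (i + 1) t ^ 2 =
      ((∫ t in (0:ℝ)..T, x 0 t * x 1 t) - z * T) / 2 := by
  have hc := h.continuous
  have hpt : ∀ t, x i t * x (i + 1) t ^ 2 =
      x i t * x (i + 1) t - x i t ^ 2 * x (i + 1) t - z := fun t => by
    have hsum := h.add_add_eq_one i t
    have hprod := (ZMod.mul_rotate_three (fun j => x j t) i).trans (hz t)
    linear_combination (x i t * x (i + 1) t) * hsum - hprod
  have hint : ∀ {f : ℝ → ℝ}, Continuous f → IntervalIntegrable f MeasureTheory.volume 0 T :=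
    fun hf => hf.intervalIntegrable 0 T
  have hsplit : ∫ t in (0:ℝ)..T, x i t * x (i + 1) t ^ 2 =
      (∫ t in (0:ℝ)..T, x i t * x (i + 1) t) - (∫ t in (0:ℝ)..T, x i t ^ 2 * x (i + 1) t)
        - z * T := by
    rw [intervalIntegral.integral_congr fun t _ => hpt t, intervalIntegral.integral_sub
      (hint (by fun_prop)) (hint (by fun_prop)), intervalIntegral.integral_sub
      (hint (by fun_prop)) (hint (by fun_prop))]
    simp [mul_comm]
  rw [h.integral_sq_mul_succ, h.integral_mul_succ_eq] at hsplit
  linarith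

theorem integral_succ_mul_deriv (h : IsCyclicLVOrbit x T)
    (hz : ∀ t, x 0 t * x 1 t * x 2 t = z) (i : ZMod 3) :
    ∫ t in (0:ℝ)..T, x (i + 1) t * (x i t * (x (i - 1) t - x (i + 1) t)) =
      z * T - ∫ t in (0:ℝ)..T, x i t * x (i + 1) t ^ 2 := by
  have hc := h.continuous
  have hpt : ∀ t, x (i + 1) t * (x i t * (x (i - 1) t - x (i + 1) t)) =
      z - x i t * x (i + 1) t ^ 2 := fun t => by
    linear_combination (ZMod.mul_rotate_three (fun j => x j t) i).trans (hz t)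
  rw [intervalIntegral.integral_congr fun t _ => hpt t, intervalIntegral.integral_sub
    intervalIntegrable_const (Continuous.intervalIntegrable (by fun_prop) _ _),
    intervalIntegral.integral_const, smul_eq_mul, sub_zero, mul_comm]

theorem integral_pred_eq_integral_succ (h : IsCyclicLVOrbit x T)
    (hz : ∀ t, x 0 t * x 1 t * x 2 t = z) (hz0 : z ≠ 0) (i : ZMod 3) :
    ∫ t in (0:ℝ)..T, x (i - 1) t = ∫ t in (0:ℝ)..T, x (i + 1) t := by
  have hc := h.continuous
  have hne := ne_zero_of_mul_mul_eq hz hz0 i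
  have hlog : ∀ t, HasDerivAt (fun t => Real.log (x i t)) (x (i - 1) t - x (i + 1) t) t :=
    fun t => ((Real.hasDerivAt_log (hne t)).comp t (h.hasDerivAt i t)).congr_deriv
      (inv_mul_cancel_left₀ (hne t) _)
  rw [← sub_eq_zero, ← intervalIntegral.integral_sub ((hc _).intervalIntegrable _ _)
    ((hc _).intervalIntegrable _ _)]
  exact integral_eq_zero_of_hasDerivAt_of_eq hlog (by fun_prop) (by simp only [h.periodic])

theorem integral_eq_div_three (h : IsCyclicLVOrbit x T)
    (hz : ∀ t, x 0 t * x 1 t * x 2 t = z) (hz0 : z ≠ 0) (i : ZMod 3) :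
    ∫ t in (0:ℝ)..T, x i t = T / 3 := by
  have hc := h.continuous
  have hnext : ∫ t in (0:ℝ)..T, x i t = ∫ t in (0:ℝ)..T, x (i - 1) t := by
    simpa only [add_sub_cancel_right, ZMod.add_one_add_one_eq_sub_one] using
      h.integral_pred_eq_integral_succ hz hz0 (i + 1)
  have htotal : (∫ t in (0:ℝ)..T, x (i - 1) t) + (∫ t in (0:ℝ)..T, x i t)
      + (∫ t in (0:ℝ)..T, x (i + 1) t) = T := by
    rw [← intervalIntegral.integral_add ((hc _).intervalIntegrable _ _)
      ((hc _).intervalIntegrable _ _), ← intervalIntegral.integral_add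
      (Continuous.intervalIntegrable (by fun_prop) _ _) ((hc _).intervalIntegrable _ _)]
    simp [h.add_add_eq_one i]
  linarith [h.integral_pred_eq_integral_succ hz hz0 i]

theorem pos (h : IsCyclicLVOrbit x T) (hz : ∀ t, x 0 t * x 1 t * x 2 t = z) (hz0 : z ≠ 0)
    (hT : 0 < T) (i : ZMod 3) (t : ℝ) : 0 < x i t := by
  refine (h.continuous i).pos_of_integral_pos (ne_zero_of_mul_mul_eq hz hz0 i) hT.le ?_ t
  rw [h.integral_eq_div_three hz hz0]
  positivity

theorem three_mul_mul_lt_integral_mul (h : IsCyclicLVOrbit x T)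
    (hz : ∀ t, x 0 t * x 1 t * x 2 t = z) (hz0 : 0 < z) (hz27 : z < 1 / 27) (hT : 0 < T) :
    3 * z * T < ∫ t in (0:ℝ)..T, x 0 t * x 1 t := by
  have hc := h.continuous
  have hpos := h.pos hz hz0.ne' hT
  have hpt : ∀ t, 0 < x 0 t * x 1 t + x 1 t * x 2 t + x 2 t * x 0 t - 9 * z := fun t => by
    rw [← hz t, sub_pos]
    exact nine_mul_lt_mul_add_mul_add_mul (hpos 0 t) (hpos 1 t) (hpos 2 t) (h.sum_eq_one t)
      (hz t ▸ hz27)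
  have h12 : ∫ t in (0:ℝ)..T, x 1 t * x 2 t = ∫ t in (0:ℝ)..T, x 0 t * x 1 t :=
    h.integral_mul_succ_eq 1
  have h20 : ∫ t in (0:ℝ)..T, x 2 t * x 0 t = ∫ t in (0:ℝ)..T, x 0 t * x 1 t :=
    h.integral_mul_succ_eq 2
  have hint : ∀ {f : ℝ → ℝ}, Continuous f → IntervalIntegrable f MeasureTheory.volume 0 T :=
    fun hf => hf.intervalIntegrable 0 T
  have hlt := intervalIntegral.intervalIntegral_pos_of_pos (hint (by fun_prop)) hpt hT
  rw [intervalIntegral.integral_sub (hint (by fun_prop)) intervalIntegrable_const,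
    intervalIntegral.integral_add (hint (by fun_prop)) (hint (by fun_prop)),
    intervalIntegral.integral_add (hint (by fun_prop)) (hint (by fun_prop)),
    intervalIntegral.integral_const, h12, h20, smul_eq_mul, sub_zero] at hlt
  linarith

end IsCyclicLVOrbit

theorem hasDerivAt_coordFn {X : ℝ → ℝ × ℝ} {t : ℝ} (hX : HasDerivAt X (LV (X t)) t)
    (i : ZMod 3) : HasDerivAt (fun t => coordFn i (X t)) (dotFn i (X t)) t := by
  have h₁ : HasDerivAt (fun t => (X t).1) (LV (X t)).1 t := hX.fst
  have h₂ : HasDerivAt (fun t => (X t).2) (LV (X t)).2 t := hX.snd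
  obtain rfl | rfl | rfl : i = 0 ∨ i = 1 ∨ i = 2 := by revert i; decide
  · refine h₁.congr_deriv ?_
    show _ = (X t).1 * ((1 - (X t).1 - (X t).2) - (X t).2)
    simp only [LV]
    ring
  · refine h₂.congr_deriv ?_
    show _ = (X t).2 * ((X t).1 - (1 - (X t).1 - (X t).2))
    simp only [LV]
    ring
  · refine (((hasDerivAt_const t 1).sub h₁).sub h₂).congr_deriv ?_
    show _ = (1 - (X t).1 - (X t).2) * ((X t).2 - (X t).1)
    simp only [LV]
    ring

theorem isCyclicLVOrbit_coordFn {X : ℝ → ℝ × ℝ} {T : ℝ}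
    (hode : ∀ t, HasDerivAt X (LV (X t)) t) (hper : ∀ t, X (t + T) = X t) :
    IsCyclicLVOrbit (fun i t => coordFn i (X t)) T where
  hasDerivAt i t := hasDerivAt_coordFn (hode t) i
  periodic i := by simpa using congrArg (coordFn i) (hper 0)
  sum_eq_one t := show (X t).1 + (X t).2 + (1 - (X t).1 - (X t).2) = 1 by ring

/-- ⟨x_i x_{i+1}²⟩ - z = -⟨x_{i+1} ẋ_i⟩ for each i; hence
m(z) := -⟨x_{i+1} ẋ_i⟩ is independent of i and equals -A(z)/T(z) > 0, with
A(z) = ∫₀ᵀ x₂ẋ₁ dt. -/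
theorem stmt_16 (z : ℝ) (hz : z ∈ Ioo (0:ℝ) (1 / 27))
    (X : ℝ → ℝ × ℝ) (hode : ∀ t, HasDerivAt X (LV (X t)) t)
    (hlevel : ∀ t, (X t).1 * (X t).2 * (1 - (X t).1 - (X t).2) = z)
    (T : ℝ) (hT : 0 < T) (hper : ∀ t, X (t + T) = X t) :
    (∀ i : ZMod 3, avgPair X T i (i + 1) - z = -avgDot X T i) ∧
    (∀ i j : ZMod 3, avgDot X T i = avgDot X T j) ∧
    -avgDot X T 0 = -(∫ t in (0:ℝ)..T, coordFn 1 (X t) * dotFn 0 (X t)) / T ∧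
    0 < -avgDot X T 0 := by
  obtain ⟨hz0, hz27⟩ := hz
  have horbit := isCyclicLVOrbit_coordFn hode hper
  set P := ∫ t in (0:ℝ)..T, coordFn 0 (X t) * coordFn 1 (X t) with hP
  have hpair : ∀ i, avgPair X T i (i + 1) = (P / T - z) / 2 := fun i => by
    rw [avgPair, horbit.integral_mul_succ_sq hlevel i, ← hP]
    field_simp
  have hdot : ∀ i, avgDot X T i = z - avgPair X T i (i + 1) := fun i => by
    simp only [avgDot, avgPair, dotFn]
    rw [horbit.integral_succ_mul_deriv hlevel i]
    field_simp
  have hmean : 3 * z < P / T := by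
    rw [lt_div_iff₀ hT]
    exact horbit.three_mul_mul_lt_integral_mul hlevel hz0 hz27 hT
  refine ⟨fun i => by rw [hdot]; ring, fun i j => by rw [hdot, hdot, hpair, hpair],
    by rw [avgDot, zero_add]; ring, ?_⟩
  rw [hdot, hpair]
  linarith
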